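/- Let G be a (P₆, house, hole, domino)-free graph with efficient dominating set D, with an induced C_k (k ≥ 4) in G² with real vertices v₁,...,v_k and auxiliary vertices x₁,...,x_k as above, where D avoids all real and auxiliary vertices. Then each v_i has a D-neighbor d_i, and these d₁,...,d_k are pairwise distinct, i.e., each d_i has exactly one neighbor among {v₁,...,v_k}. -/

import Mathlib

open SimpleGraph Finset

variable {V : Type*}

/-- The square of a graph `G`: two distinct vertices are adjacent iff
their distance in `G` is 1 or 2. -/
def square (G : SimpleGraph V) : SimpleGraph V where
  Adj u v := u ≠ v ∧ (G.Adj u v ∨ ∃ w, G.Adj u w ∧ G.Adj w v)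
  symm := by
    constructor
    rintro u v ⟨h, h2 | ⟨w, hw1, hw2⟩⟩
    · exact ⟨h.symm, Or.inl h2.symm⟩
    · exact ⟨h.symm, Or.inr ⟨w, hw2.symm, hw1.symm⟩⟩
  loopless := by constructor; rintro u ⟨h, _⟩; exact h rfl

/-- `D` is an efficient dominating set of `G`: every vertex is dominated
(by closed neighborhoods) by exactly one vertex of `D`. -/
def IsEDS (G : SimpleGraph V) (D : Set V) : Prop :=
  ∀ v : V, ∃! d : V, d ∈ D ∧ (d = v ∨ G.Adj d v)

/-- `G` has no induced subgraph isomorphic to `H`. -/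
def Free {W : Type*} (G : SimpleGraph V) (H : SimpleGraph W) : Prop :=
  IsEmpty (H ↪g G)

/-- The house: the complement of the path on five vertices. -/
def house : SimpleGraph (Fin 5) := (pathGraph 5)ᶜ

/-- The domino: a `P₅` `x₁ … x₅` together with a vertex adjacent to `x₁, x₃, x₅`. -/
def domino : SimpleGraph (Fin 6) :=
  SimpleGraph.fromRel (fun i j =>
    (i, j) ∈ [((0 : Fin 6), (1 : Fin 6)), (1, 2), (2, 3), (3, 4), (5, 0), (5, 2), (5, 4)])

/-- A graph is hole-free if it contains no induced cycle `C_k`, `k ≥ 5`. -/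
def HoleFree (G : SimpleGraph V) : Prop := ∀ k, 5 ≤ k → _root_.Free G (cycleGraph k)

/-- A graph is chordal if it contains no induced cycle `C_k`, `k ≥ 4`. -/
def Chordal (G : SimpleGraph V) : Prop := ∀ k, 4 ≤ k → _root_.Free G (cycleGraph k)

/-!
In `G²` the only real vertices within distance two of `v i` are `v (i ± 1)`, so the claim fails
only if some `d ∈ D` is adjacent to two consecutive real vertices `v i`, `v (i + 1)`. Look at
`v (i-1), x (i-1), v i, d, v (i+1), x (i+1), v (i+2)`: unless `d` is adjacent to both `x (i-1)` and
`x (i+1)`, these vertices contain an induced `P₆`, `C₅` or house. If it is, efficiency of `D` keeps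
the `D`-neighbours of `v (i+2)` and `v (i-1)` away from `N[d]`, and they turn the path
`v (i-1), x (i-1), d, x (i+1), v (i+2)` into an induced `C₅`, `C₆` or `P₆`.
-/

/-- As `H` has no twins, `f` is automatically injective: the patterns below need no hypotheses
that their vertices are distinct. -/
theorem Free.false_of_adj_iff {W : Type*} {G : SimpleGraph V} {H : SimpleGraph W}
    (hG : _root_.Free G H) (hH : ∀ i j, (∀ l, H.Adj i l ↔ H.Adj j l) → i = j) (f : W → V)
    (hf : ∀ i j, H.Adj i j ↔ G.Adj (f i) (f j)) : False :=
  hG.false ⟨⟨f, fun i j hij => hH i j fun l => by rw [hf, hf, hij]⟩, (hf _ _).symm⟩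

theorem Free.false_of_path6 {G : SimpleGraph V} (h : _root_.Free G (pathGraph 6))
    {a b c d e f : V}
    (hab : G.Adj a b) (hbc : G.Adj b c) (hcd : G.Adj c d) (hde : G.Adj d e) (hef : G.Adj e f)
    (hac : ¬ G.Adj a c) (had : ¬ G.Adj a d) (hae : ¬ G.Adj a e) (haf : ¬ G.Adj a f)
    (hbd : ¬ G.Adj b d) (hbe : ¬ G.Adj b e) (hbf : ¬ G.Adj b f)
    (hce : ¬ G.Adj c e) (hcf : ¬ G.Adj c f) (hdf : ¬ G.Adj d f) : False := by
  refine h.false_of_adj_iff (by simp only [pathGraph_adj]; decide) ![a, b, c, d, e, f] ?_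
  intro i j
  fin_cases i <;> fin_cases j <;> simp [pathGraph_adj] <;>
    first | exact G.loopless _ | assumption | exact G.adj_symm ‹_› | exact mt G.adj_symm ‹_›

theorem Free.false_of_cycle5 {G : SimpleGraph V} (h : _root_.Free G (cycleGraph 5))
    {a b c d e : V}
    (hab : G.Adj a b) (hbc : G.Adj b c) (hcd : G.Adj c d) (hde : G.Adj d e) (hea : G.Adj e a)
    (hac : ¬ G.Adj a c) (had : ¬ G.Adj a d) (hbd : ¬ G.Adj b d) (hbe : ¬ G.Adj b e)
    (hce : ¬ G.Adj c e) : False := by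
  refine h.false_of_adj_iff (by decide) ![a, b, c, d, e] ?_
  intro i j
  fin_cases i <;> fin_cases j <;> simp +decide <;>
    first | exact G.loopless _ | assumption | exact G.adj_symm ‹_› | exact mt G.adj_symm ‹_›

theorem Free.false_of_cycle6 {G : SimpleGraph V} (h : _root_.Free G (cycleGraph 6))
    {a b c d e f : V}
    (hab : G.Adj a b) (hbc : G.Adj b c) (hcd : G.Adj c d) (hde : G.Adj d e) (hef : G.Adj e f)
    (hfa : G.Adj f a)
    (hac : ¬ G.Adj a c) (had : ¬ G.Adj a d) (hae : ¬ G.Adj a e)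
    (hbd : ¬ G.Adj b d) (hbe : ¬ G.Adj b e) (hbf : ¬ G.Adj b f)
    (hce : ¬ G.Adj c e) (hcf : ¬ G.Adj c f) (hdf : ¬ G.Adj d f) : False := by
  refine h.false_of_adj_iff (by decide) ![a, b, c, d, e, f] ?_
  intro i j
  fin_cases i <;> fin_cases j <;> simp +decide <;>
    first | exact G.loopless _ | assumption | exact G.adj_symm ‹_› | exact mt G.adj_symm ‹_›

theorem Free.false_of_house {G : SimpleGraph V} (h : _root_.Free G house) {a b c d e : V}
    (hab : G.Adj a b) (hbc : G.Adj b c) (hcd : G.Adj c d) (hda : G.Adj d a)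
    (hea : G.Adj e a) (hed : G.Adj e d)
    (hac : ¬ G.Adj a c) (hbd : ¬ G.Adj b d) (heb : ¬ G.Adj e b) (hec : ¬ G.Adj e c) : False := by
  refine h.false_of_adj_iff (by simp only [house, compl_adj, pathGraph_adj]; decide)
    ![a, c, e, b, d] ?_
  intro i j
  fin_cases i <;> fin_cases j <;> simp [house, pathGraph_adj] <;>
    first | exact G.loopless _ | assumption | exact G.adj_symm ‹_› | exact mt G.adj_symm ‹_›

namespace IsEDS

variable {G : SimpleGraph V} {D : Set V}

theorem exists_adj_of_notMem (hD : IsEDS G D) {a : V} (ha : a ∉ D) : ∃ d ∈ D, G.Adj d a := by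
  obtain ⟨d, ⟨hd, rfl | had⟩, -⟩ := hD a
  · exact absurd hd ha
  · exact ⟨d, hd, had⟩

theorem eq_of_dominates (hD : IsEDS G D) {a d d' : V} (hd : d ∈ D) (hd' : d' ∈ D)
    (ha : d = a ∨ G.Adj d a) (ha' : d' = a ∨ G.Adj d' a) : d = d' :=
  (hD a).unique ⟨hd, ha⟩ ⟨hd', ha'⟩

theorem eq_of_adj (hD : IsEDS G D) {a d d' : V} (hd : d ∈ D) (hd' : d' ∈ D)
    (ha : G.Adj d a) (ha' : G.Adj d' a) : d = d' :=
  hD.eq_of_dominates hd hd' (.inr ha) (.inr ha')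

theorem not_adj (hD : IsEDS G D) {d d' : V} (hd : d ∈ D) (hd' : d' ∈ D) : ¬ G.Adj d d' :=
  fun h => h.ne (hD.eq_of_dominates hd hd' (.inr h) (.inl rfl))

/-- The `D`-neighbours of `w` and of `p` would extend the path `p q s u w` to an induced `C₅`,
`C₆` or `P₆`. -/
theorem notMem_of_path (hD : IsEDS G D) (h6 : _root_.Free G (pathGraph 6))
    (h5 : _root_.Free G (cycleGraph 5)) (hc6 : _root_.Free G (cycleGraph 6)) {p q s u w : V}
    (hp : p ∉ D) (hw : w ∉ D)
    (hpq : G.Adj p q) (hqs : G.Adj q s) (hsu : G.Adj s u) (huw : G.Adj u w)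
    (hpu : ¬ G.Adj p u) (hpw : ¬ G.Adj p w) (hqw : ¬ G.Adj q w)
    (hsp : ¬ G.Adj s p) (hsw : ¬ G.Adj s w) : s ∉ D := by
  intro hs
  obtain ⟨g, hg, hgw⟩ := hD.exists_adj_of_notMem hw
  have hgs : g ≠ s := fun h => hsw (h ▸ hgw)
  have hgq : ¬ G.Adj g q := fun h => hgs (hD.eq_of_adj hg hs h hqs.symm)
  have hgu : ¬ G.Adj g u := fun h => hgs (hD.eq_of_adj hg hs h hsu)
  have hgs' : ¬ G.Adj g s := hD.not_adj hg hs
  by_cases hgp : G.Adj g p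
  · by_cases hqu : G.Adj q u
    · exact h5.false_of_cycle5 hgp hpq hqu huw hgw.symm hgq hgu hpu hpw hqw
    · exact hc6.false_of_cycle6 hgp hpq hqs hsu huw hgw.symm hgq hgs' hgu
        (mt G.adj_symm hsp) hpu hpw hqu hqw hsw
  obtain ⟨h, hh, hhp⟩ := hD.exists_adj_of_notMem hp
  have hhs : h ≠ s := fun e => hsp (e ▸ hhp)
  have hhg : h ≠ g := fun e => hgp (e ▸ hhp)
  have hhq : ¬ G.Adj h q := fun e => hhs (hD.eq_of_adj hh hs e hqs.symm)
  have hhu : ¬ G.Adj h u := fun e => hhs (hD.eq_of_adj hh hs e hsu)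
  have hhw : ¬ G.Adj h w := fun e => hhg (hD.eq_of_adj hh hg e hgw)
  have hpg : ¬ G.Adj p g := mt G.adj_symm hgp
  by_cases hqu : G.Adj q u
  · exact h6.false_of_path6 hhp hpq hqu huw hgw.symm hhq hhu hhw (hD.not_adj hh hg)
      hpu hpw hpg hqw (mt G.adj_symm hgq) (mt G.adj_symm hgu)
  · exact h6.false_of_path6 hpq hqs hsu huw hgw.symm (mt G.adj_symm hsp) hpu hpw hpg
      hqu hqw (mt G.adj_symm hgq) hsw (mt G.adj_symm hgs') (mt G.adj_symm hgu)

end IsEDS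

/-- `p q r t u w` stand for `v (i-1), x (i-1), v i, v (i+1), x (i+1), v (i+2)` and `s` for a
common neighbour of `v i` and `v (i+1)`. -/
structure BridgeConfig (G : SimpleGraph V) (p q r s t u w : V) : Prop where
  adj_pq : G.Adj p q
  adj_qr : G.Adj q r
  adj_sr : G.Adj s r
  adj_st : G.Adj s t
  adj_tu : G.Adj t u
  adj_uw : G.Adj u w
  not_adj_pr : ¬ G.Adj p r
  not_adj_pt : ¬ G.Adj p t
  not_adj_pw : ¬ G.Adj p w
  not_adj_rt : ¬ G.Adj r t
  not_adj_rw : ¬ G.Adj r w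
  not_adj_tw : ¬ G.Adj t w
  not_adj_qt : ¬ G.Adj q t
  not_adj_qw : ¬ G.Adj q w
  not_adj_pu : ¬ G.Adj p u
  not_adj_ru : ¬ G.Adj r u
  not_adj_sp : ¬ G.Adj s p
  not_adj_sw : ¬ G.Adj s w

namespace BridgeConfig

variable {G : SimpleGraph V} {p q r s t u w : V}

theorem reverse (c : BridgeConfig G p q r s t u w) : BridgeConfig G w u t s r q p where
  adj_pq := c.adj_uw.symm
  adj_qr := c.adj_tu.symm
  adj_sr := c.adj_st
  adj_st := c.adj_sr
  adj_tu := c.adj_qr.symm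
  adj_uw := c.adj_pq.symm
  not_adj_pr := mt G.adj_symm c.not_adj_tw
  not_adj_pt := mt G.adj_symm c.not_adj_rw
  not_adj_pw := mt G.adj_symm c.not_adj_pw
  not_adj_rt := mt G.adj_symm c.not_adj_rt
  not_adj_rw := mt G.adj_symm c.not_adj_pt
  not_adj_tw := mt G.adj_symm c.not_adj_pr
  not_adj_qt := mt G.adj_symm c.not_adj_ru
  not_adj_qw := mt G.adj_symm c.not_adj_pu
  not_adj_pu := mt G.adj_symm c.not_adj_qw
  not_adj_ru := mt G.adj_symm c.not_adj_qt
  not_adj_sp := c.not_adj_sw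
  not_adj_sw := c.not_adj_sp

theorem adj_sq (c : BridgeConfig G p q r s t u w) (h6 : _root_.Free G (pathGraph 6))
    (hH : _root_.Free G house) (h5 : _root_.Free G (cycleGraph 5)) : G.Adj s q := by
  by_contra hsq
  by_cases hsu : G.Adj s u <;> by_cases hqu : G.Adj q u
  · exact hH.false_of_house c.adj_sr c.adj_qr.symm hqu hsu.symm c.adj_st.symm c.adj_tu
      hsq c.not_adj_ru (mt G.adj_symm c.not_adj_rt) (mt G.adj_symm c.not_adj_qt)
  · exact h6.false_of_path6 c.adj_pq c.adj_qr c.adj_sr.symm hsu c.adj_uw c.not_adj_pr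
      (mt G.adj_symm c.not_adj_sp) c.not_adj_pu c.not_adj_pw (mt G.adj_symm hsq) hqu
      c.not_adj_qw c.not_adj_ru c.not_adj_rw c.not_adj_sw
  · exact h5.false_of_cycle5 c.adj_qr c.adj_sr.symm c.adj_st c.adj_tu hqu.symm
      (mt G.adj_symm hsq) c.not_adj_qt c.not_adj_rt c.not_adj_ru hsu
  · exact h6.false_of_path6 c.adj_pq c.adj_qr c.adj_sr.symm c.adj_st c.adj_tu c.not_adj_pr
      (mt G.adj_symm c.not_adj_sp) c.not_adj_pt c.not_adj_pu (mt G.adj_symm hsq) c.not_adj_qt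
      hqu c.not_adj_rt c.not_adj_ru hsu

theorem notMem {D : Set V} (c : BridgeConfig G p q r s t u w) (hD : IsEDS G D)
    (h6 : _root_.Free G (pathGraph 6)) (hH : _root_.Free G house)
    (h5 : _root_.Free G (cycleGraph 5)) (hc6 : _root_.Free G (cycleGraph 6))
    (hp : p ∉ D) (hw : w ∉ D) : s ∉ D :=
  hD.notMem_of_path h6 h5 hc6 hp hw c.adj_pq (c.adj_sq h6 hH h5).symm
    (c.reverse.adj_sq h6 hH h5) c.adj_uw c.not_adj_pu c.not_adj_pw c.not_adj_qw
    c.not_adj_sp c.not_adj_sw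

end BridgeConfig

/-- The real vertices `v i` induce a cycle in `square G`, and `x i` is a common neighbour of
`v i` and `v (i + 1)`. -/
structure IsRealizedSquareCycle (G : SimpleGraph V) {k : ℕ} (v x : ZMod k → V) : Prop where
  four_le : 4 ≤ k
  injective : Function.Injective v
  not_square_adj : ∀ i j, j ≠ i - 1 → j ≠ i → j ≠ i + 1 → ¬ (square G).Adj (v i) (v j)
  dist_eq_two : ∀ i, G.dist (v i) (v (i + 1)) = 2
  adj_left : ∀ i, G.Adj (v i) (x i)
  adj_right : ∀ i, G.Adj (x i) (v (i + 1))

namespace IsRealizedSquareCycle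

variable {G : SimpleGraph V} {k : ℕ} {v x : ZMod k → V}

theorem natCast_ne_zero (hC : IsRealizedSquareCycle G v x) {n : ℕ} (h0 : n ≠ 0) (h4 : n < 4) :
    (n : ZMod k) ≠ 0 := fun h =>
  h0 (Nat.eq_zero_of_dvd_of_lt ((ZMod.natCast_eq_zero_iff n k).1 h) (by linarith [hC.four_le]))

theorem add_one_ne (hC : IsRealizedSquareCycle G v x) (c : ZMod k) : c + 1 ≠ c :=
  add_ne_left.2 (by exact_mod_cast hC.natCast_ne_zero one_ne_zero (by norm_num))

theorem add_one_add_one_ne (hC : IsRealizedSquareCycle G v x) (c : ZMod k) : c + 1 + 1 ≠ c := by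
  rw [add_assoc]
  exact add_ne_left.2 (by exact_mod_cast hC.natCast_ne_zero two_ne_zero (by norm_num))

theorem add_one_add_one_add_one_ne (hC : IsRealizedSquareCycle G v x) (c : ZMod k) :
    c + 1 + 1 + 1 ≠ c := by
  rw [add_assoc, add_assoc]
  exact add_ne_left.2 (by exact_mod_cast hC.natCast_ne_zero three_ne_zero (by norm_num))

theorem eq_sub_one_or_eq_add_one (hC : IsRealizedSquareCycle G v x) {a b : ZMod k}
    (h : (square G).Adj (v a) (v b)) : b = a - 1 ∨ b = a + 1 := by
  by_contra! hb
  exact hC.not_square_adj a b hb.1 (fun e => h.1 (congrArg v e.symm)) hb.2 h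

theorem not_adj (hC : IsRealizedSquareCycle G v x) (a b : ZMod k) : ¬ G.Adj (v a) (v b) := by
  have not_adj_succ (c : ZMod k) : ¬ G.Adj (v c) (v (c + 1)) := fun h => by
    simpa [dist_eq_one_iff_adj.2 h] using hC.dist_eq_two c
  intro h
  rcases hC.eq_sub_one_or_eq_add_one ⟨h.ne, .inl h⟩ with rfl | rfl
  · exact not_adj_succ (a - 1) (by rw [sub_add_cancel]; exact h.symm)
  · exact not_adj_succ a h

theorem not_adj_of_adj_of_adj (hC : IsRealizedSquareCycle G v x) {y : V} {a b : ZMod k}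
    (h0 : G.Adj y (v a)) (h1 : G.Adj y (v (a + 1))) (hb0 : b ≠ a) (hb1 : b ≠ a + 1) :
    ¬ G.Adj y (v b) := by
  intro hb
  have square_adj {c : ZMod k} (hc : G.Adj y (v c)) (hcb : b ≠ c) : (square G).Adj (v c) (v b) :=
    ⟨hC.injective.ne hcb.symm, .inr ⟨y, hc.symm, hb⟩⟩
  obtain rfl := (hC.eq_sub_one_or_eq_add_one (square_adj h0 hb0)).resolve_right hb1
  rcases hC.eq_sub_one_or_eq_add_one (square_adj h1 hb1) with h | h
  · exact hb0 (by rw [h, add_sub_cancel_right])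
  · exact hC.add_one_add_one_add_one_ne (a - 1) (by rw [sub_add_cancel]; exact h.symm)

theorem bridgeConfig (hC : IsRealizedSquareCycle G v x) {s : V} {c : ZMod k}
    (hr : G.Adj s (v c)) (ht : G.Adj s (v (c + 1))) :
    BridgeConfig G (v (c - 1)) (x (c - 1)) (v c) s (v (c + 1)) (x (c + 1)) (v (c + 1 + 1)) := by
  obtain ⟨a, rfl⟩ : ∃ a, c = a + 1 := ⟨c - 1, (sub_add_cancel c 1).symm⟩
  rw [add_sub_cancel_right]
  have h1 := hC.add_one_ne
  have h2 := hC.add_one_add_one_ne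
  have h3 := hC.add_one_add_one_add_one_ne
  exact
    { adj_pq := hC.adj_left a
      adj_qr := hC.adj_right a
      adj_sr := hr
      adj_st := ht
      adj_tu := hC.adj_left _
      adj_uw := hC.adj_right _
      not_adj_pr := hC.not_adj _ _
      not_adj_pt := hC.not_adj _ _
      not_adj_pw := hC.not_adj _ _
      not_adj_rt := hC.not_adj _ _
      not_adj_rw := hC.not_adj _ _
      not_adj_tw := hC.not_adj _ _
      not_adj_qt := fun h => hC.not_adj_of_adj_of_adj (hC.adj_left a).symm (hC.adj_right a)
        (h2 a) (h1 _) h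
      not_adj_qw := fun h => hC.not_adj_of_adj_of_adj (hC.adj_left a).symm (hC.adj_right a)
        (h3 a) (h2 _) h
      not_adj_pu := fun h => hC.not_adj_of_adj_of_adj (hC.adj_left _).symm (hC.adj_right _)
        (h2 a).symm (h3 a).symm h.symm
      not_adj_ru := fun h => hC.not_adj_of_adj_of_adj (hC.adj_left _).symm (hC.adj_right _)
        (h1 _).symm (h2 _).symm h.symm
      not_adj_sp := hC.not_adj_of_adj_of_adj hr ht (h1 a).symm (h2 a).symm
      not_adj_sw := hC.not_adj_of_adj_of_adj hr ht (h2 _) (h1 _) }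

end IsRealizedSquareCycle

theorem stmt6_general (G : SimpleGraph V) (h6 : _root_.Free G (pathGraph 6)) (hH : _root_.Free G house)
    (hhole : HoleFree G)
    (D : Set V) (hED : IsEDS G D)
    (k : ℕ) (hk : 4 ≤ k) (v : ZMod k → V) (hinj : Function.Injective v)
    (hnon : ∀ i j : ZMod k, j ≠ i - 1 → j ≠ i → j ≠ i + 1 → ¬ (square G).Adj (v i) (v j))
    (x : ZMod k → V) (hd2 : ∀ i : ZMod k, G.dist (v i) (v (i + 1)) = 2)
    (hx : ∀ i : ZMod k, G.Adj (v i) (x i) ∧ G.Adj (x i) (v (i + 1)))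
    (hDout : ∀ i : ZMod k, v i ∉ D ∧ x i ∉ D) :
    ∀ i : ZMod k, ∃ d ∈ D, G.Adj d (v i) ∧ ∀ j : ZMod k, j ≠ i → ¬ G.Adj d (v j) := by
  have hC : IsRealizedSquareCycle G v x :=
    ⟨hk, hinj, hnon, hd2, fun i => (hx i).1, fun i => (hx i).2⟩
  have no_double_contact (d : V) (hd : d ∈ D) (c : ZMod k) (hr : G.Adj d (v c))
      (ht : G.Adj d (v (c + 1))) : False :=
    (hC.bridgeConfig hr ht).notMem hED h6 hH (hhole 5 (by norm_num)) (hhole 6 (by norm_num))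
      (hDout _).1 (hDout _).1 hd
  intro i
  obtain ⟨d, hd, hdi⟩ := hED.exists_adj_of_notMem (hDout i).1
  refine ⟨d, hd, hdi, fun j hji hdj => ?_⟩
  rcases hC.eq_sub_one_or_eq_add_one ⟨hinj.ne hji.symm, .inr ⟨d, hdi.symm, hdj⟩⟩ with rfl | rfl
  · exact no_double_contact d hd (i - 1) hdj (by rwa [sub_add_cancel])
  · exact no_double_contact d hd i hdi hdj

theorem stmt6 (G : SimpleGraph V) (h6 : _root_.Free G (pathGraph 6)) (hH : _root_.Free G house)
    (hhole : HoleFree G) (hdom : _root_.Free G domino)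
    (D : Set V) (hED : IsEDS G D)
    (k : ℕ) (hk : 4 ≤ k) (v : ZMod k → V) (hinj : Function.Injective v)
    (hadj : ∀ i : ZMod k, (square G).Adj (v i) (v (i + 1)))
    (hnon : ∀ i j : ZMod k, j ≠ i - 1 → j ≠ i → j ≠ i + 1 → ¬ (square G).Adj (v i) (v j))
    (x : ZMod k → V) (hd2 : ∀ i : ZMod k, G.dist (v i) (v (i + 1)) = 2)
    (hx : ∀ i : ZMod k, G.Adj (v i) (x i) ∧ G.Adj (x i) (v (i + 1)))
    (hxadj : ∀ i : ZMod k, G.Adj (x i) (x (i + 1)))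
    (hDout : ∀ i : ZMod k, v i ∉ D ∧ x i ∉ D) :
    ∀ i : ZMod k, ∃ d ∈ D, G.Adj d (v i) ∧ ∀ j : ZMod k, j ≠ i → ¬ G.Adj d (v j) :=
  stmt6_general G h6 hH hhole D hED k hk v hinj hnon x hd2 hx hDout
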